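/- arXiv:2501.14666 — 3 statements merged into one kernel-verified Lean document; each statement's English description precedes it below -/
import Mathlib

section
/- The function φ(t) = cos(2t) + cosh(2t) + t·sin(2t) − t·sinh(2t) satisfies φ(0) = 2 > 0 and tends to −∞ as t → ∞; together with strict monotone decrease on (0,∞), the equation φ(t) = 0 has a unique positive solution. -/
/-!
The derivative `φ'(t) = sinh 2t − sin 2t + 2t cos 2t − 2t cosh 2t` vanishes at `0` and has
derivative `−4t (sinh 2t + sin 2t)`, which is negative for `t > 0` because `sinh x > x ≥ −sin x`.
Hence `φ' < 0` on `(0, ∞)`. Since `cosh − sinh ≤ 1` and `sinh 2t ≥ 2t`, `φ(t) ≤ 2 − t` for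
`t ≥ 2`, so `φ → −∞`, and the intermediate value theorem together with strict monotonicity
give exactly one positive root.
-/

open Real Set Filter

theorem existsUnique_pos_root_of_strictAntiOn {f : ℝ → ℝ} (hf : Continuous f) (h0 : 0 < f 0)
    (hanti : StrictAntiOn f (Ioi 0)) (hlim : Tendsto f atTop atBot) :
    ∃! t : ℝ, 0 < t ∧ f t = 0 := by
  obtain ⟨T, hT, hT0⟩ :=
    ((hlim.eventually (eventually_lt_atBot 0)).and (eventually_gt_atTop 0)).exists
  obtain ⟨t, ⟨ht0, -⟩, ht⟩ := intermediate_value_Ioo' hT0.le hf.continuousOn ⟨hT, h0⟩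
  exact ⟨t, ⟨ht0, ht⟩, fun s ⟨hs0, hs⟩ => hanti.injOn hs0 ht0 (hs.trans ht.symm)⟩

theorem sinh_add_sin_pos {x : ℝ} (hx : 0 < x) : 0 < sinh x + sin x := by
  have hsinh : x < sinh x := self_lt_sinh_iff.mpr hx
  have hsin : -x ≤ sin x := by
    simpa [abs_of_pos hx] using neg_le_of_abs_le (abs_sin_le_abs (x := x))
  linarith

noncomputable def phi (t : ℝ) : ℝ :=
  cos (2 * t) + cosh (2 * t) + t * sin (2 * t) - t * sinh (2 * t)

noncomputable def phiDeriv (t : ℝ) : ℝ :=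
  sinh (2 * t) - sin (2 * t) + 2 * t * cos (2 * t) - 2 * t * cosh (2 * t)

theorem continuous_phi : Continuous phi := by
  unfold phi
  fun_prop

theorem phi_zero : phi 0 = 2 := by
  norm_num [phi]

theorem hasDerivAt_phi (t : ℝ) : HasDerivAt phi (phiDeriv t) t := by
  have h2 : HasDerivAt (fun t : ℝ => 2 * t) 2 t := hasDerivAt_const_mul 2
  have := (((hasDerivAt_cos (2 * t)).comp t h2).add ((hasDerivAt_cosh (2 * t)).comp t h2)).add
    ((hasDerivAt_id t).mul ((hasDerivAt_sin (2 * t)).comp t h2)) |>.sub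
    ((hasDerivAt_id t).mul ((hasDerivAt_sinh (2 * t)).comp t h2))
  refine this.congr_deriv ?_
  simp only [phiDeriv, Function.comp_apply, id]
  ring

theorem hasDerivAt_phiDeriv (t : ℝ) :
    HasDerivAt phiDeriv (-(4 * t * (sinh (2 * t) + sin (2 * t)))) t := by
  have h2 : HasDerivAt (fun t : ℝ => 2 * t) 2 t := hasDerivAt_const_mul 2
  have := ((((hasDerivAt_sinh (2 * t)).comp t h2).sub ((hasDerivAt_sin (2 * t)).comp t h2)).add
    (h2.mul ((hasDerivAt_cos (2 * t)).comp t h2))).sub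
    (h2.mul ((hasDerivAt_cosh (2 * t)).comp t h2))
  refine this.congr_deriv ?_
  simp only [Function.comp_apply]
  ring

theorem strictAntiOn_Ici_of_hasDerivAt_neg {f f' : ℝ → ℝ} (hf : ∀ t, HasDerivAt f (f' t) t)
    (hf' : ∀ t, 0 < t → f' t < 0) : StrictAntiOn f (Ici 0) :=
  strictAntiOn_of_hasDerivWithinAt_neg (convex_Ici 0)
    (fun t _ => (hf t).continuousAt.continuousWithinAt) (fun t _ => (hf t).hasDerivWithinAt)
    (by simpa using hf')

theorem phiDeriv_neg {t : ℝ} (ht : 0 < t) : phiDeriv t < 0 := by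
  have hanti : StrictAntiOn phiDeriv (Ici 0) :=
    strictAntiOn_Ici_of_hasDerivAt_neg hasDerivAt_phiDeriv fun s hs =>
      neg_neg_of_pos (mul_pos (by positivity) (sinh_add_sin_pos (by positivity)))
  simpa [phiDeriv] using hanti self_mem_Ici ht.le ht

theorem strictAntiOn_phi : StrictAntiOn phi (Ioi 0) :=
  (strictAntiOn_Ici_of_hasDerivAt_neg hasDerivAt_phi fun _ => phiDeriv_neg).mono
    Ioi_subset_Ici_self

theorem phi_le {t : ℝ} (ht : 2 ≤ t) : phi t ≤ 2 - t := by
  have hcos := cos_le_one (2 * t)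
  have hsin := sin_le_one (2 * t)
  have hexp : cosh (2 * t) - sinh (2 * t) ≤ 1 := by
    rw [cosh_sub_sinh, exp_le_one_iff]
    linarith
  have hsinh : 2 * t ≤ sinh (2 * t) := self_le_sinh_iff.mpr (by linarith)
  unfold phi
  nlinarith

theorem tendsto_phi_atTop : Tendsto phi atTop atBot := by
  refine tendsto_atBot_mono' atTop ?_
    (tendsto_atBot_add_const_left atTop 2 tendsto_neg_atTop_atBot)
  filter_upwards [eventually_ge_atTop 2] with t ht
  exact (phi_le ht).trans_eq (sub_eq_add_neg 2 t)

/-- `φ(t) = cos 2t + cosh 2t + t sin 2t − t sinh 2t` satisfies `φ(0) = 2 > 0`, tends to `−∞`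
at `+∞`, is strictly decreasing on `(0,∞)`, and hence `φ(t) = 0` has a unique positive root. -/
theorem stmt_6 :
    let φ : ℝ → ℝ := fun t =>
      Real.cos (2 * t) + Real.cosh (2 * t) + t * Real.sin (2 * t) - t * Real.sinh (2 * t)
    φ 0 = 2 ∧ (0 : ℝ) < 2 ∧
    Tendsto φ atTop atBot ∧
    StrictAntiOn φ (Set.Ioi 0) ∧
    ∃! t : ℝ, 0 < t ∧ φ t = 0 := by
  show phi 0 = 2 ∧ (0 : ℝ) < 2 ∧ Tendsto phi atTop atBot ∧ StrictAntiOn phi (Ioi 0) ∧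
    ∃! t : ℝ, 0 < t ∧ phi t = 0
  exact ⟨phi_zero, two_pos, tendsto_phi_atTop, strictAntiOn_phi,
    existsUnique_pos_root_of_strictAntiOn continuous_phi (phi_zero ▸ two_pos)
      strictAntiOn_phi tendsto_phi_atTop⟩
end

section
/- Let W̃ ∈ L¹_loc(ℝ^d) be radial and F ∈ L¹(ℝ^{d+1}) be radial with support in the closed ball of radius R. Writing W̃(x̃) = w̃(|x̃|), for the unit vector v = (0,…,0,1) ∈ ℝ^{d+1} one has, for a.e. x = (x̃, x_{d+1}) ∈ ℝ^{d+1}: (w̃(dist(span{v}, ·)) * F)(x) = (W̃ * P[F])(x̃), where P[F](x̃) = ∫_ℝ F(x̃, x_{d+1}) dx_{d+1}. -/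
/-!
Split `ℝ^{d+1} = ℝ^d × ℝ`. The distance from `x - y` to the last coordinate axis is the norm of
the first `d` coordinates of `x - y`, so the left-hand side is `∫∫ W(x̃ - z) F(z, t) dz dt` and
Fubini gives the right-hand side. Fubini needs this integrand to be integrable on `ℝ^d × ℝ`,
i.e. the convolution of the integrable, compactly supported `F` with the locally integrable
`(z, t) ↦ W z` to exist at `(x̃, x_{d+1})`, which holds for almost every `x`.
-/

open Real MeasureTheory Set

theorem MeasureTheory.LocallyIntegrable.comp_fst {α β E : Type*} [MeasurableSpace α]
    [TopologicalSpace α] [MeasurableSpace β] [TopologicalSpace β] [NormedAddCommGroup E]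
    {f : α → E} {μ : Measure α} [SFinite μ] (hf : LocallyIntegrable f μ) (ν : Measure β)
    [SFinite ν] [IsLocallyFiniteMeasure ν] :
    LocallyIntegrable (fun p : α × β => f p.1) (μ.prod ν) := by
  rintro ⟨a, b⟩
  obtain ⟨U, hU, hfU⟩ := hf a
  obtain ⟨V, hV, hνV⟩ := ν.finiteAt_nhds b
  have : IsFiniteMeasure (ν.restrict V) := isFiniteMeasure_restrict.2 hνV.ne
  refine ⟨U ×ˢ V, prod_mem_nhds hU hV, ?_⟩
  rw [IntegrableOn, ← Measure.prod_restrict]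
  exact hfU.comp_fst _

section Convolution

variable {𝕜 G E E' F : Type*} [NontriviallyNormedField 𝕜] [NormedAddCommGroup E]
  [NormedAddCommGroup E'] [NormedAddCommGroup F] [NormedSpace 𝕜 E] [NormedSpace 𝕜 E']
  [NormedSpace 𝕜 F] (L : E →L[𝕜] E' →L[𝕜] F)
  [NormedAddCommGroup G] [ProperSpace G] [MeasurableSpace G] [BorelSpace G]
  {μ : Measure G} [SFinite μ] [μ.IsAddRightInvariant]

/-- The locally integrable factor only matters on a ball around the compact support of the
other one, and on such a ball it is integrable. -/
theorem HasCompactSupport.ae_convolutionExistsAt {f : G → E} {g : G → E'}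
    (hcf : HasCompactSupport f) (hf : Integrable f μ) (hg : LocallyIntegrable g μ) :
    ∀ᵐ x ∂μ, ConvolutionExistsAt f g x L μ := by
  obtain ⟨R, hR⟩ := hcf.isCompact.isBounded.subset_closedBall 0
  have htrunc : ∀ n : ℕ, ∀ᵐ x ∂μ,
      ConvolutionExistsAt f ((Metric.closedBall 0 (n + R)).indicator g) x L μ := fun n =>
    hf.ae_convolution_exists L <|
      (hg.integrableOn_isCompact (isCompact_closedBall 0 _)).integrable_indicator
        measurableSet_closedBall
  filter_upwards [ae_all_iff.2 htrunc] with x hx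
  obtain ⟨n, hn⟩ := exists_nat_gt ‖x‖
  refine (hx n).congr (Filter.Eventually.of_forall fun t => ?_)
  by_cases ht : t ∈ tsupport f
  · have hmem : x - t ∈ Metric.closedBall (0 : G) (n + R) := by
      have := mem_closedBall_zero_iff.1 (hR ht)
      rw [mem_closedBall_zero_iff]
      linarith [norm_sub_le x t]
    simp only [indicator_of_mem hmem]
  · simp [image_eq_zero_of_notMem_tsupport ht]

end Convolution

namespace EuclideanSpace

variable {d : ℕ}

def init (x : EuclideanSpace ℝ (Fin (d + 1))) : EuclideanSpace ℝ (Fin d) :=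
  WithLp.toLp 2 fun i => x i.castSucc

@[simp]
theorem init_apply (x : EuclideanSpace ℝ (Fin (d + 1))) (i : Fin d) : init x i = x i.castSucc :=
  rfl

theorem init_sub (x y : EuclideanSpace ℝ (Fin (d + 1))) : init (x - y) = init x - init y := rfl

theorem norm_sq_eq_norm_init_sq_add (x : EuclideanSpace ℝ (Fin (d + 1))) :
    ‖x‖ ^ 2 = ‖init x‖ ^ 2 + x (Fin.last d) ^ 2 := by
  simp [EuclideanSpace.norm_sq_eq, Fin.sum_univ_castSucc]

theorem infDist_span_single_last (x : EuclideanSpace ℝ (Fin (d + 1))) :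
    Metric.infDist x (Submodule.span ℝ {single (Fin.last d) (1 : ℝ)}) = ‖init x‖ := by
  have hdist : ∀ c : ℝ, dist x (c • single (Fin.last d) 1) ^ 2 =
      ‖init x‖ ^ 2 + (x (Fin.last d) - c) ^ 2 := fun c => by
    have : init (c • single (Fin.last d) (1 : ℝ)) = 0 := by
      ext i; simp [(Fin.castSucc_lt_last i).ne]
    rw [dist_eq_norm, norm_sq_eq_norm_init_sq_add, init_sub, this, sub_zero]
    simp
  apply le_antisymm
  · refine (Metric.infDist_le_dist_of_mem (Submodule.smul_mem _ (x (Fin.last d))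
      (Submodule.mem_span_singleton_self _))).trans_eq ?_
    rw [← sq_eq_sq₀ dist_nonneg (norm_nonneg _), hdist, sub_self]
    ring
  · rw [Metric.le_infDist ⟨0, Submodule.zero_mem _⟩]
    intro y hy
    obtain ⟨c, rfl⟩ := Submodule.mem_span_singleton.1 hy
    refine le_of_pow_le_pow_left₀ two_ne_zero dist_nonneg ?_
    rw [hdist]
    nlinarith

variable (d) in
def splitLast : EuclideanSpace ℝ (Fin (d + 1)) ≃ᵐ EuclideanSpace ℝ (Fin d) × ℝ :=
  (MeasurableEquiv.toLp 2 (Fin (d + 1) → ℝ)).symm.trans <|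
    (MeasurableEquiv.piFinSuccAbove (fun _ => ℝ) (Fin.last d)).trans <|
      MeasurableEquiv.prodComm.trans <|
        (MeasurableEquiv.toLp 2 (Fin d → ℝ)).prodCongr (MeasurableEquiv.refl ℝ)

theorem splitLast_apply (x : EuclideanSpace ℝ (Fin (d + 1))) :
    splitLast d x = (init x, x (Fin.last d)) := by
  ext i <;> simp [splitLast, init, Fin.init, MeasurableEquiv.prodCongr, MeasurableEquiv.prodComm]

theorem splitLast_symm_apply (z : EuclideanSpace ℝ (Fin d)) (t : ℝ) :
    (splitLast d).symm (z, t) = WithLp.toLp 2 (Fin.snoc (α := fun _ => ℝ) z.ofLp t) := by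
  rw [MeasurableEquiv.symm_apply_eq, splitLast_apply]
  ext i <;> simp

theorem norm_splitLast_le (x : EuclideanSpace ℝ (Fin (d + 1))) : ‖splitLast d x‖ ≤ ‖x‖ := by
  have := norm_sq_eq_norm_init_sq_add x
  rw [splitLast_apply, Prod.norm_mk, max_le_iff]
  constructor <;> refine le_of_pow_le_pow_left₀ two_ne_zero (norm_nonneg _) ?_
  · nlinarith
  · rw [Real.norm_eq_abs, sq_abs]
    nlinarith

variable (d) in
theorem measurePreserving_splitLast :
    MeasurePreserving (splitLast d) volume (volume.prod volume) :=
  ((((EuclideanSpace.volume_preserving_symm_measurableEquiv_toLp (Fin d)).symm _).prod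
    (MeasurePreserving.id _)).comp (Measure.measurePreserving_swap ..)).comp
    ((volume_preserving_piFinSuccAbove (fun _ => ℝ) (Fin.last d)).comp
      (EuclideanSpace.volume_preserving_symm_measurableEquiv_toLp (Fin (d + 1))))

end EuclideanSpace

open EuclideanSpace in
theorem stmt_11_general (d : ℕ) (R : ℝ)
    (W : EuclideanSpace ℝ (Fin d) → ℝ) (w : ℝ → ℝ)
    (hWrad : ∀ z : EuclideanSpace ℝ (Fin d), W z = w ‖z‖)
    (hWloc : LocallyIntegrable W)
    (F : EuclideanSpace ℝ (Fin (d + 1)) → ℝ)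
    (hFint : Integrable F)
    (hFsupp : ∀ y : EuclideanSpace ℝ (Fin (d + 1)), R < ‖y‖ → F y = 0) :
    ∀ᵐ x : EuclideanSpace ℝ (Fin (d + 1)),
      (∫ y : EuclideanSpace ℝ (Fin (d + 1)),
        w (Metric.infDist (x - y)
          (Submodule.span ℝ {EuclideanSpace.single (Fin.last d) (1 : ℝ)} :
            Submodule ℝ (EuclideanSpace ℝ (Fin (d + 1))))) * F y) =
      ∫ z : EuclideanSpace ℝ (Fin d),
        W ((show EuclideanSpace ℝ (Fin d) from WithLp.toLp 2 (fun i => x (Fin.castSucc i))) - z) *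
          ∫ t : ℝ, F (show EuclideanSpace ℝ (Fin (d + 1)) from WithLp.toLp 2 (Fin.snoc (α := fun _ => ℝ) z.ofLp t)) := by
  have he := measurePreserving_splitLast d
  have hK : Integrable (F ∘ (splitLast d).symm) (volume.prod volume) :=
    (he.symm _).integrable_comp_emb (splitLast d).symm.measurableEmbedding |>.2 hFint
  have hKc : HasCompactSupport (F ∘ (splitLast d).symm) :=
    .intro (isCompact_closedBall 0 R) fun p hp => hFsupp ((splitLast d).symm p) <|
      (not_le.1 (mt mem_closedBall_zero_iff.2 hp)).trans_le <| by
        simpa using norm_splitLast_le ((splitLast d).symm p)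
  have hconv :=
    hKc.ae_convolutionExistsAt (ContinuousLinearMap.mul ℝ ℝ) hK (hWloc.comp_fst volume)
  filter_upwards [he.quasiMeasurePreserving.ae hconv] with x hx
  have hint : Integrable (fun p => W (init x - p.1) * F ((splitLast d).symm p))
      (volume.prod volume) := by
    simpa [ConvolutionExistsAt, splitLast_apply, mul_comm] using hx
  calc _ = ∫ y, W (init x - (splitLast d y).1) * F ((splitLast d).symm (splitLast d y)) :=
        integral_congr_ae <| ae_of_all _ fun y => by
          dsimp only
          rw [MeasurableEquiv.symm_apply_apply, splitLast_apply, ← init_sub, hWrad,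
            infDist_span_single_last]
    _ = ∫ p, W (init x - p.1) * F ((splitLast d).symm p) ∂(volume.prod volume) :=
        he.integral_comp' fun p => W (init x - p.1) * F ((splitLast d).symm p)
    _ = _ := by
        rw [integral_prod _ hint]
        simp only [integral_const_mul, splitLast_symm_apply]
        rfl

/-- Key Fubini computation of the dimension-reduction lemma: with
`v = (0,…,0,1) ∈ ℝ^{d+1}`, for a.e. `x ∈ ℝ^{d+1}`,
`(w̃(dist(span v, ·)) * F)(x) = (W̃ * P[F])(x̃)`, where `x̃` collects the first `d`
coordinates of `x` and `P[F](z) = ∫_ℝ F(z, t) dt`. -/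
theorem stmt_11 (d : ℕ) (hd : 1 ≤ d) (R : ℝ) (hR : 0 < R)
    (W : EuclideanSpace ℝ (Fin d) → ℝ) (w : ℝ → ℝ)
    (hWrad : ∀ z : EuclideanSpace ℝ (Fin d), W z = w ‖z‖)
    (hWloc : LocallyIntegrable W)
    (F : EuclideanSpace ℝ (Fin (d + 1)) → ℝ)
    (hFint : Integrable F)
    (hFrad : ∃ f : ℝ → ℝ, ∀ y, F y = f ‖y‖)
    (hFsupp : ∀ y : EuclideanSpace ℝ (Fin (d + 1)), R < ‖y‖ → F y = 0) :
    ∀ᵐ x : EuclideanSpace ℝ (Fin (d + 1)),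
      (∫ y : EuclideanSpace ℝ (Fin (d + 1)),
        w (Metric.infDist (x - y)
          (Submodule.span ℝ {EuclideanSpace.single (Fin.last d) (1 : ℝ)} :
            Submodule ℝ (EuclideanSpace ℝ (Fin (d + 1))))) * F y) =
      ∫ z : EuclideanSpace ℝ (Fin d),
        W ((show EuclideanSpace ℝ (Fin d) from WithLp.toLp 2 (fun i => x (Fin.castSucc i))) - z) *
          ∫ t : ℝ, F (show EuclideanSpace ℝ (Fin (d + 1)) from WithLp.toLp 2 (Fin.snoc (α := fun _ => ℝ) z.ofLp t)) :=
  stmt_11_general d R W w hWrad hWloc F hFint hFsupp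
end

section
/- For d ≥ 1 and a > −d with a ≠ 0, the spherical average (1/|S^d|)·∫_{S^d} dist(span{v}, x)^a dS(v) equals η_{d,a}·|x|^a for every x ∈ ℝ^{d+1}, where η_{d,a} = Γ((a+d)/2)·Γ((d+1)/2) / (Γ((a+d+1)/2)·Γ(d/2)). -/
/-!
Fix a unit vector `u` and integrate `y ↦ dist(y, ℝu)^a · exp(-‖y‖²)` over `ℝ^{d+1}` in two ways.
In polar coordinates the integral is the spherical integral `∫_{S^d} dist(v, ℝu)^a` times
`∫_0^∞ r^{d+a} e^{-r²} dr = Γ((d+a+1)/2)/2`. After rotating `u` to the first basis vector, the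
distance is the norm of the last `d` coordinates, so the integral is a one-dimensional Gaussian
`√π` times `∫_{ℝ^d} ‖z‖^a e^{-‖z‖²} dz = |S^{d-1}| Γ((d+a)/2)/2`. Comparing the two and using
`|S^{n-1}| = 2π^{n/2}/Γ(n/2)` gives `η_{d,a}`. For general `x = ‖x‖u` and unit `v`,
`dist(x, ℝv) = ‖x‖ · dist(v, ℝu)`.
-/

open Real MeasureTheory Set Metric
open scoped Pointwise RealInnerProductSpace

section SpanSingleton

theorem infDist_smul_submodule {𝕜 E : Type*} [NormedField 𝕜] [NormedAddCommGroup E]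
    [NormedSpace 𝕜 E] (K : Submodule 𝕜 E) (c : 𝕜) (x : E) :
    infDist (c • x) K = ‖c‖ * infDist x K := by
  rcases eq_or_ne c 0 with rfl | hc
  · simp [infDist_zero_of_mem K.zero_mem]
  have hK : c • (K : Set E) = K := by
    ext y
    simp [Set.mem_smul_set_iff_inv_smul_mem₀ hc, Submodule.smul_mem_iff K (inv_ne_zero hc)]
  rw [← infDist_smul₀ hc, hK]

variable {E : Type*} [NormedAddCommGroup E] [InnerProductSpace ℝ E]

theorem infDist_span_singleton_eq_sqrt {u : E} (hu : ‖u‖ = 1) (x : E) :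
    infDist x (ℝ ∙ u) = √(‖x‖ ^ 2 - ⟪u, x⟫ ^ 2) := by
  have hproj : (ℝ ∙ u).starProjection x = ⟪u, x⟫ • u := by
    simp [Submodule.starProjection_singleton, hu]
  have hdist : infDist x (ℝ ∙ u) = ‖x - (ℝ ∙ u).starProjection x‖ := by
    rw [infDist_eq_iInf, Submodule.starProjection_minimal]
    simp only [dist_eq_norm]
    rfl
  rw [hdist, hproj, ← sqrt_sq (norm_nonneg _), norm_sub_sq_real, norm_smul, real_inner_smul_right,
    real_inner_comm, hu, mul_one, norm_eq_abs, sq_abs]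
  ring_nf

theorem infDist_span_singleton_comm {u v : E} (hu : ‖u‖ = 1) (hv : ‖v‖ = 1) :
    infDist u (ℝ ∙ v) = infDist v (ℝ ∙ u) := by
  rw [infDist_span_singleton_eq_sqrt hv, infDist_span_singleton_eq_sqrt hu, hu, hv,
    real_inner_comm]

theorem LinearIsometryEquiv.infDist_map_span_singleton (T : E ≃ₗᵢ[ℝ] E) (x u : E) :
    infDist (T x) (ℝ ∙ T u) = infDist x (ℝ ∙ u) := by
  have hspan : ((ℝ ∙ T u : Submodule ℝ E) : Set E) = T '' (ℝ ∙ u) := by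
    simpa using congrArg SetLike.coe (Submodule.map_span (T.toLinearEquiv : E →ₗ[ℝ] E) {u}).symm
  rw [hspan, infDist_image T.isometry]

theorem integral_comp_infDist_span_singleton_of_norm_eq [FiniteDimensional ℝ E]
    [MeasurableSpace E] [BorelSpace E] (g : ℝ → ℝ → ℝ) {u w : E} (h : ‖u‖ = ‖w‖) :
    ∫ y : E, g (infDist y (ℝ ∙ u)) ‖y‖ = ∫ y : E, g (infDist y (ℝ ∙ w)) ‖y‖ := by
  obtain ⟨T, rfl⟩ : ∃ T : E ≃ₗᵢ[ℝ] E, T u = w := ⟨_, Submodule.reflection_sub h⟩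
  rw [← T.measurePreserving.integral_comp T.toHomeomorph.measurableEmbedding
    fun y ↦ g (infDist y (ℝ ∙ T u)) ‖y‖]
  simp_rw [LinearIsometryEquiv.norm_map, LinearIsometryEquiv.infDist_map_span_singleton]

end SpanSingleton

theorem exists_norm_eq_one_and_norm_smul_eq {E : Type*} [NormedAddCommGroup E] [NormedSpace ℝ E]
    [Nontrivial E] (x : E) : ∃ u : E, ‖u‖ = 1 ∧ ‖x‖ • u = x := by
  rcases eq_or_ne x 0 with rfl | hx
  · obtain ⟨u, hu⟩ := exists_norm_eq E zero_le_one
    exact ⟨u, hu, by simp⟩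
  · exact ⟨‖x‖⁻¹ • x, norm_smul_inv_norm hx, by simp [smul_smul, hx]⟩

theorem integral_Ioi_pow_mul_rpow_mul_exp_neg_sq (n : ℕ) {a : ℝ} (ha : -(n + 1 : ℝ) < a) :
    ∫ r in Ioi (0 : ℝ), r ^ n * (r ^ a * exp (-r ^ 2)) = Gamma ((n + a + 1) / 2) / 2 := by
  rw [← one_div_mul_eq_div, ← integral_rpow_mul_exp_neg_rpow two_pos (by linarith)]
  refine setIntegral_congr_fun measurableSet_Ioi fun r (hr : 0 < r) ↦ ?_
  rw [rpow_add hr, rpow_natCast, rpow_two, mul_assoc]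

section Polar

variable {E : Type*} [NormedAddCommGroup E] [NormedSpace ℝ E] [MeasurableSpace E] [BorelSpace E]
  [FiniteDimensional ℝ E] [Nontrivial E] (μ : Measure E) [μ.IsAddHaarMeasure]

open Measure in
theorem integral_eq_integral_sphere_mul_integral_Ioi
    {F : E → ℝ} {f : sphere (0 : E) 1 → ℝ} {g : ℝ → ℝ}
    (hF : ∀ (v : sphere (0 : E) 1) (r : ℝ), 0 < r → F (r • (v : E)) = f v * g r) :
    ∫ x, F x ∂μ = (∫ v, f v ∂μ.toSphere) *
      ∫ r in Ioi (0 : ℝ), r ^ (Module.finrank ℝ E - 1) * g r := by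
  have hpolar : ∀ x : ({(0 : E)}ᶜ : Set E),
      F x = f (homeomorphUnitSphereProd E x).1 * g (homeomorphUnitSphereProd E x).2 := by
    intro x
    conv_lhs => rw [← (homeomorphUnitSphereProd E).symm_apply_apply x]
    exact hF _ _ (homeomorphUnitSphereProd E x).2.2
  calc ∫ x, F x ∂μ = ∫ x : ({(0 : E)}ᶜ : Set E), F x ∂(μ.comap (↑)) := by
        rw [integral_subtype_comap (measurableSet_singleton _).compl fun x ↦ F x,
          restrict_compl_singleton]
    _ = ∫ p : sphere (0 : E) 1 × Ioi (0 : ℝ), f p.1 * g p.2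
          ∂(μ.toSphere.prod (volumeIoiPow (Module.finrank ℝ E - 1))) := by
        simp_rw [hpolar]
        exact (μ.measurePreserving_homeomorphUnitSphereProd).integral_comp
          (Homeomorph.measurableEmbedding _) (fun p ↦ f p.1 * g p.2)
    _ = (∫ v, f v ∂μ.toSphere) *
          ∫ r : Ioi (0 : ℝ), g r ∂(volumeIoiPow (Module.finrank ℝ E - 1)) :=
        integral_prod_mul f (fun r : Ioi (0 : ℝ) ↦ g r)
    _ = _ := by
        simp only [volumeIoiPow, ENNReal.ofReal]
        rw [integral_withDensity_eq_integral_smul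
            ((measurable_subtype_coe.pow_const _).real_toNNReal),
          integral_subtype_comap measurableSet_Ioi
            fun r ↦ (r ^ (Module.finrank ℝ E - 1)).toNNReal • g r]
        refine congrArg _ (setIntegral_congr_fun measurableSet_Ioi fun r (hr : 0 < r) ↦ ?_)
        rw [NNReal.smul_def, coe_toNNReal _ (pow_nonneg hr.le _), smul_eq_mul]

theorem integral_rpow_norm_mul_exp_neg_sq {a : ℝ} (ha : -(Module.finrank ℝ E : ℝ) < a) :
    ∫ x, ‖x‖ ^ a * exp (-‖x‖ ^ 2) ∂μ =
      μ.toSphere.real univ * (Gamma ((Module.finrank ℝ E + a) / 2) / 2) := by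
  have hn : 1 ≤ Module.finrank ℝ E := Module.finrank_pos
  rw [integral_eq_integral_sphere_mul_integral_Ioi μ (f := fun _ ↦ 1)
      (g := fun r ↦ r ^ a * exp (-r ^ 2)) fun v r hr ↦ ?_,
    integral_const, integral_Ioi_pow_mul_rpow_mul_exp_neg_sq _ (by push_cast [hn]; linarith)]
  · rw [smul_eq_mul, mul_one]
    congr 3
    push_cast [hn]
    ring
  · rw [norm_smul, norm_eq_of_mem_sphere, mul_one, norm_of_nonneg hr.le, one_mul]

end Polar

theorem toSphere_real_univ_euclideanSpace {n : ℕ} (hn : 1 ≤ n) :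
    (volume : Measure (EuclideanSpace ℝ (Fin n))).toSphere.real univ =
      2 * √π ^ n / Gamma (n / 2) := by
  have : Nonempty (Fin n) := ⟨⟨0, hn⟩⟩
  have hΓ : Gamma (n / 2 + 1) = n / 2 * Gamma (n / 2) := Gamma_add_one (by positivity)
  rw [Measure.toSphere_real_apply_univ, finrank_euclideanSpace_fin, measureReal_def,
    EuclideanSpace.volume_ball, Fintype.card_fin, ENNReal.ofReal_one, one_pow, one_mul,
    ENNReal.toReal_ofReal (by positivity), hΓ]
  have : (n : ℝ) ≠ 0 := by positivity
  field_simp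

theorem EuclideanSpace.integral_eq_integral_prod_cons (n : ℕ)
    (F : EuclideanSpace ℝ (Fin (n + 1)) → ℝ) :
    ∫ y, F y = ∫ p : ℝ × EuclideanSpace ℝ (Fin n), F (WithLp.toLp 2 (Fin.cons p.1 p.2.ofLp)) := by
  let e : ℝ × EuclideanSpace ℝ (Fin n) ≃ᵐ EuclideanSpace ℝ (Fin (n + 1)) :=
    ((MeasurableEquiv.refl ℝ).prodCongr (MeasurableEquiv.toLp 2 (Fin n → ℝ)).symm).trans
      ((MeasurableEquiv.piFinSuccAbove (fun _ ↦ ℝ) 0).symm.trans (MeasurableEquiv.toLp 2 _))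
  have he : MeasurePreserving e :=
    (MeasurePreserving.prod (.id volume)
      (EuclideanSpace.volume_preserving_symm_measurableEquiv_toLp _)).trans <|
    (volume_preserving_piFinSuccAbove (fun _ ↦ ℝ) 0).symm.trans
      (EuclideanSpace.volume_preserving_symm_measurableEquiv_toLp _).symm
  rw [← he.integral_comp' F]
  congr 1 with p
  simp [e, MeasurableEquiv.prodCongr, MeasurableEquiv.piFinSuccAbove, Fin.insertNthEquiv,
    Fin.insertNth_zero']

theorem integral_infDist_span_single_zero_mul_exp_neg_sq (n : ℕ) (h : ℝ → ℝ) :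
    ∫ y : EuclideanSpace ℝ (Fin (n + 1)),
        h (infDist y (ℝ ∙ EuclideanSpace.single (0 : Fin (n + 1)) (1 : ℝ))) * exp (-‖y‖ ^ 2) =
      √π * ∫ z : EuclideanSpace ℝ (Fin n), h ‖z‖ * exp (-‖z‖ ^ 2) := by
  have hnorm (t : ℝ) (z : EuclideanSpace ℝ (Fin n)) :
      ‖(WithLp.toLp 2 (Fin.cons t z.ofLp) : EuclideanSpace ℝ (Fin (n + 1)))‖ ^ 2 =
        t ^ 2 + ‖z‖ ^ 2 := by
    simp [EuclideanSpace.norm_sq_eq, Fin.sum_univ_succ]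
  have hsingle : ‖EuclideanSpace.single (0 : Fin (n + 1)) (1 : ℝ)‖ = 1 := by simp
  have hgauss : ∫ t : ℝ, exp (-t ^ 2) = √π := by simpa using integral_gaussian 1
  rw [EuclideanSpace.integral_eq_integral_prod_cons, Measure.volume_eq_prod]
  simp_rw [infDist_span_singleton_eq_sqrt hsingle, hnorm, EuclideanSpace.inner_single_left,
    map_one, one_mul, Fin.cons_zero, add_sub_cancel_left, sqrt_sq (norm_nonneg _), neg_add,
    exp_add, mul_left_comm _ (exp _)]
  rw [integral_prod_mul (fun t : ℝ ↦ exp (-t ^ 2)) fun z ↦ h ‖z‖ * exp (-‖z‖ ^ 2), hgauss]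

theorem average_sphere_rpow_infDist_span_singleton {d : ℕ} (hd : 1 ≤ d) {a : ℝ}
    (ha : -(d : ℝ) < a) {u : EuclideanSpace ℝ (Fin (d + 1))} (hu : ‖u‖ = 1) :
    1 / (volume : Measure (EuclideanSpace ℝ (Fin (d + 1)))).toSphere.real univ *
        ∫ v : sphere (0 : EuclideanSpace ℝ (Fin (d + 1))) 1,
          infDist (v : EuclideanSpace ℝ (Fin (d + 1))) (ℝ ∙ u) ^ a
          ∂(volume : Measure (EuclideanSpace ℝ (Fin (d + 1)))).toSphere =
      Gamma ((a + d) / 2) * Gamma ((d + 1) / 2) / (Gamma ((a + d + 1) / 2) * Gamma (d / 2)) := by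
  have : NeZero d := ⟨by omega⟩ -- so that `EuclideanSpace ℝ (Fin d)` is `Nontrivial`
  set J := ∫ v : sphere (0 : EuclideanSpace ℝ (Fin (d + 1))) 1,
    infDist (v : EuclideanSpace ℝ (Fin (d + 1))) (ℝ ∙ u) ^ a
    ∂(volume : Measure (EuclideanSpace ℝ (Fin (d + 1)))).toSphere
  have hpolar : ∫ y : EuclideanSpace ℝ (Fin (d + 1)), infDist y (ℝ ∙ u) ^ a * exp (-‖y‖ ^ 2) =
      J * (Gamma ((d + a + 1) / 2) / 2) := by
    rw [integral_eq_integral_sphere_mul_integral_Ioi volume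
      (f := fun v ↦ infDist (v : EuclideanSpace ℝ (Fin (d + 1))) (ℝ ∙ u) ^ a)
      (g := fun r ↦ r ^ a * exp (-r ^ 2)) fun v r hr ↦ ?_, finrank_euclideanSpace_fin,
      Nat.add_sub_cancel, integral_Ioi_pow_mul_rpow_mul_exp_neg_sq d (by linarith)]
    rw [infDist_smul_submodule, norm_smul, norm_eq_of_mem_sphere, mul_one, norm_of_nonneg hr.le,
      mul_rpow hr.le infDist_nonneg]
    ring
  have hcoord : ∫ y : EuclideanSpace ℝ (Fin (d + 1)), infDist y (ℝ ∙ u) ^ a * exp (-‖y‖ ^ 2) =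
      √π * ((volume : Measure (EuclideanSpace ℝ (Fin d))).toSphere.real univ *
        (Gamma ((d + a) / 2) / 2)) := by
    rw [integral_comp_infDist_span_singleton_of_norm_eq (fun s r ↦ s ^ a * exp (-r ^ 2))
        (w := EuclideanSpace.single 0 1) (by simp [hu]),
      integral_infDist_span_single_zero_mul_exp_neg_sq d (· ^ a),
      integral_rpow_norm_mul_exp_neg_sq, finrank_euclideanSpace_fin]
    simpa using ha
  have hJ : J = √π * (volume : Measure (EuclideanSpace ℝ (Fin d))).toSphere.real univ *
      Gamma ((a + d) / 2) / Gamma ((a + d + 1) / 2) := by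
    rw [eq_div_iff (Gamma_pos_of_pos (by linarith)).ne', add_comm a]
    linarith [hpolar.symm.trans hcoord]
  rw [hJ, toSphere_real_univ_euclideanSpace hd, toSphere_real_univ_euclideanSpace (by omega)]
  have : 0 < Gamma (d / 2) := Gamma_pos_of_pos (by positivity)
  push_cast
  rw [pow_succ]
  field_simp

theorem stmt_12_general (d : ℕ) (hd : 1 ≤ d) (a : ℝ) (ha : -(d : ℝ) < a) :
    ∀ x : EuclideanSpace ℝ (Fin (d + 1)),
      (1 / (((volume : Measure (EuclideanSpace ℝ (Fin (d + 1)))).toSphere Set.univ).toReal)) *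
        ∫ v : Metric.sphere (0 : EuclideanSpace ℝ (Fin (d + 1))) 1,
          (Metric.infDist x
            (Submodule.span ℝ {(v : EuclideanSpace ℝ (Fin (d + 1)))} :
              Submodule ℝ (EuclideanSpace ℝ (Fin (d + 1))))) ^ a
          ∂((volume : Measure (EuclideanSpace ℝ (Fin (d + 1)))).toSphere) =
      (Real.Gamma ((a + d) / 2) * Real.Gamma ((d + 1) / 2) /
        (Real.Gamma ((a + d + 1) / 2) * Real.Gamma (d / 2))) * ‖x‖ ^ a := by
  intro x
  obtain ⟨u, hu, hxu⟩ := exists_norm_eq_one_and_norm_smul_eq x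
  have hintegrand (v : sphere (0 : EuclideanSpace ℝ (Fin (d + 1))) 1) :
      infDist x (ℝ ∙ (v : EuclideanSpace ℝ (Fin (d + 1)))) ^ a =
        ‖x‖ ^ a * infDist (v : EuclideanSpace ℝ (Fin (d + 1))) (ℝ ∙ u) ^ a := by
    rw [← hxu, infDist_smul_submodule, norm_norm, hxu,
      infDist_span_singleton_comm hu (norm_eq_of_mem_sphere v),
      mul_rpow (norm_nonneg x) infDist_nonneg]
  simp_rw [hintegrand]
  rw [integral_const_mul, ← measureReal_def, mul_left_comm,
    average_sphere_rpow_infDist_span_singleton hd ha hu, mul_comm]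

/-- For `d ≥ 1`, `a > −d`, `a ≠ 0`, the average over the unit sphere `S^d ⊂ ℝ^{d+1}`
of `dist(span v, x)^a` equals `η_{d,a}·|x|^a`, where
`η_{d,a} = Γ((a+d)/2)Γ((d+1)/2)/(Γ((a+d+1)/2)Γ(d/2))`. The surface measure on `S^d` is
`volume.toSphere`, whose total mass is `|S^d|`. -/
theorem stmt_12 (d : ℕ) (hd : 1 ≤ d) (a : ℝ) (ha : -(d : ℝ) < a) (ha0 : a ≠ 0) :
    ∀ x : EuclideanSpace ℝ (Fin (d + 1)),
      (1 / (((volume : Measure (EuclideanSpace ℝ (Fin (d + 1)))).toSphere Set.univ).toReal)) *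
        ∫ v : Metric.sphere (0 : EuclideanSpace ℝ (Fin (d + 1))) 1,
          (Metric.infDist x
            (Submodule.span ℝ {(v : EuclideanSpace ℝ (Fin (d + 1)))} :
              Submodule ℝ (EuclideanSpace ℝ (Fin (d + 1))))) ^ a
          ∂((volume : Measure (EuclideanSpace ℝ (Fin (d + 1)))).toSphere) =
      (Real.Gamma ((a + d) / 2) * Real.Gamma ((d + 1) / 2) /
        (Real.Gamma ((a + d + 1) / 2) * Real.Gamma (d / 2))) * ‖x‖ ^ a :=
  stmt_12_general d hd a ha
end
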